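/- Every local minimizer of the problem: minimize x^T A₀ x subject to x^T A₁ x = 1 (where A₀, A₁ are symmetric n×n matrices) is a global minimizer. -/
import Mathlib

open Matrix

/-- The quadratic form `xᵀ A x` on Euclidean space. -/
noncomputable def quadForm {n : ℕ} (A : Matrix (Fin n) (Fin n) ℝ)
    (x : EuclideanSpace ℝ (Fin n)) : ℝ :=
  ∑ i, ∑ j, A i j * x i * x j

private lemma quad_comb {n : ℕ} (A : Matrix (Fin n) (Fin n) ℝ)
    (u v : EuclideanSpace ℝ (Fin n)) (a t : ℝ) :
    quadForm A (a • u + t • v) = a^2 * quadForm A u + a*t*(∑ i, ∑ j, A i j * u i * v j)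
      + a*t*(∑ i, ∑ j, A i j * v i * u j) + t^2 * quadForm A v := by
  have h : ∀ i j, A i j * (a • u + t • v) i * (a • u + t • v) j
      = a^2*(A i j * u i * u j) + a*t*(A i j * u i * v j)
        + a*t*(A i j * v i * u j) + t^2*(A i j * v i * v j) := by
    intro i j
    simp only [PiLp.add_apply, PiLp.smul_apply, smul_eq_mul]
    ring
  simp only [quadForm, h, Finset.sum_add_distrib, Finset.mul_sum]

private lemma cross_symm {n : ℕ} (A : Matrix (Fin n) (Fin n) ℝ) (h : Aᵀ = A)
    (u v : EuclideanSpace ℝ (Fin n)) :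
    ∑ i, ∑ j, A i j * v i * u j = ∑ i, ∑ j, A i j * u i * v j := by
  rw [Finset.sum_comm]
  refine Finset.sum_congr rfl fun i _ => Finset.sum_congr rfl fun j _ => ?_
  have hij : A j i = A i j := by simpa [Matrix.transpose_apply] using congrFun (congrFun h i) j
  rw [hij]; ring

/-- Coefficient of the feasible path: `α(t) = -bt + √(1 + (b²-1)t²)`. -/
noncomputable def pathCoef (b t : ℝ) : ℝ := -(b*t) + Real.sqrt (1 + (b^2-1)*t^2)

private lemma pathCoef_zero (b : ℝ) : pathCoef b 0 = 1 := by simp [pathCoef]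

private lemma pathCoef_continuous (b : ℝ) : Continuous (pathCoef b) := by
  unfold pathCoef
  exact ((continuous_const.mul continuous_id).neg).add
    (Real.continuous_sqrt.comp (continuous_const.add (continuous_const.mul (continuous_pow 2))))

private lemma pathCoef_key (b t : ℝ) (ht : |t| < 1) :
    (pathCoef b t)^2 + 2*(pathCoef b t)*t*b + t^2 = 1 := by
  have ht2 : t^2 < 1 := by
    have h := abs_lt.mp ht
    nlinarith [h.1, h.2]
  have hnn : (0:ℝ) ≤ 1 + (b^2-1)*t^2 := by nlinarith [sq_nonneg (b*t)]
  have hsq : Real.sqrt (1 + (b^2-1)*t^2) ^ 2 = 1 + (b^2-1)*t^2 := Real.sq_sqrt hnn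
  have h2 : pathCoef b t + b*t = Real.sqrt (1 + (b^2-1)*t^2) := by unfold pathCoef; ring
  have h3 : (pathCoef b t + b*t)^2 = 1 + (b^2-1)*t^2 := by rw [h2]; exact hsq
  linear_combination h3

set_option maxHeartbeats 1000000 in
theorem stmt5 {n : ℕ} (A₀ A₁ : Matrix (Fin n) (Fin n) ℝ) (h0 : A₀ᵀ = A₀) (h1 : A₁ᵀ = A₁)
    (xs : EuclideanSpace ℝ (Fin n)) (hfeas : quadForm A₁ xs = 1)
    (hloc : ∃ ε > 0, ∀ x : EuclideanSpace ℝ (Fin n),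
      quadForm A₁ x = 1 → ‖x - xs‖ < ε → quadForm A₀ xs ≤ quadForm A₀ x) :
    ∀ x : EuclideanSpace ℝ (Fin n), quadForm A₁ x = 1 → quadForm A₀ xs ≤ quadForm A₀ x := by
  obtain ⟨ε, hε, hmin⟩ := hloc
  intro x hx
  obtain ⟨b, hb⟩ : ∃ b : ℝ, b = ∑ i, ∑ j, A₁ i j * xs i * x j := ⟨_, rfl⟩
  obtain ⟨c, hc⟩ : ∃ c : ℝ, c = ∑ i, ∑ j, A₀ i j * xs i * x j := ⟨_, rfl⟩
  obtain ⟨p, hp⟩ : ∃ p : ℝ, p = quadForm A₀ xs := ⟨_, rfl⟩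
  obtain ⟨q, hq⟩ : ∃ q : ℝ, q = quadForm A₀ x := ⟨_, rfl⟩
  rw [← hp, ← hq]
  -- the feasible path through xs in direction x
  have hfeasY : ∀ t : ℝ, |t| < 1 → quadForm A₁ (pathCoef b t • xs + t • x) = 1 := by
    intro t ht
    rw [quad_comb A₁ xs x (pathCoef b t) t, cross_symm A₁ h1 xs x, hfeas, hx, ← hb]
    linear_combination pathCoef_key b t ht
  have hvalY : ∀ t : ℝ, |t| < 1 →
      quadForm A₀ (pathCoef b t • xs + t • x)
        = p + t*(2*(pathCoef b t)*(c - b*p) + t*(q - p)) := by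
    intro t ht
    rw [quad_comb A₀ xs x (pathCoef b t) t, cross_symm A₀ h0 xs x, ← hc, ← hp, ← hq]
    linear_combination p * (pathCoef_key b t ht)
  -- continuity of the path at 0
  have hyc : Continuous (fun t : ℝ => pathCoef b t • xs + t • x) :=
    ((pathCoef_continuous b).smul continuous_const).add (continuous_id.smul continuous_const)
  obtain ⟨δ₁, hδ₁, hδ₁'⟩ := Metric.continuousAt_iff.mp (hyc.continuousAt (x := 0)) ε hε
  obtain ⟨δ₂, hδ₂, hδ₂'⟩ :=
    Metric.continuousAt_iff.mp ((pathCoef_continuous b).continuousAt (x := 0)) (1/2) (by norm_num)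
  obtain ⟨δ, hδdef⟩ : ∃ δ : ℝ, δ = min 1 (min δ₁ δ₂) := ⟨_, rfl⟩
  have hδpos : 0 < δ := by rw [hδdef]; positivity
  have hδ1 : δ ≤ 1 := by rw [hδdef]; exact min_le_left _ _
  have hδd1 : δ ≤ δ₁ := by rw [hδdef]; exact le_trans (min_le_right _ _) (min_le_left _ _)
  have hδd2 : δ ≤ δ₂ := by rw [hδdef]; exact le_trans (min_le_right _ _) (min_le_right _ _)
  -- local minimality along the path
  have P : ∀ t : ℝ, |t| < δ → 0 ≤ t * (2*(pathCoef b t)*(c - b*p) + t*(q - p)) := by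
    intro t ht
    have ht1 : |t| < 1 := lt_of_lt_of_le ht hδ1
    have hnear := hδ₁' (by simpa [Real.dist_eq] using lt_of_lt_of_le ht hδd1)
    simp only [pathCoef_zero, one_smul, zero_smul, add_zero] at hnear
    have hnorm : ‖(pathCoef b t • xs + t • x) - xs‖ < ε := by
      rw [← dist_eq_norm]; exact hnear
    have h := hmin _ (hfeasY t ht1) hnorm
    rw [hvalY t ht1, ← hp] at h
    linarith
  -- pathCoef is near 1 for small t
  have hαhalf : ∀ t : ℝ, |t| < δ → 1/2 < pathCoef b t := by
    intro t ht
    have h := hδ₂' (by simpa [Real.dist_eq] using lt_of_lt_of_le ht hδd2)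
    rw [pathCoef_zero, Real.dist_eq] at h
    have h' := abs_lt.mp h
    linarith [h'.1]
  obtain ⟨K, hK⟩ : ∃ K : ℝ, K = c - b*p := ⟨_, rfl⟩
  obtain ⟨D, hD⟩ : ∃ D : ℝ, D = q - p := ⟨_, rfl⟩
  rw [← hK, ← hD] at P
  -- show the cross term K vanishes
  have hK0 : K = 0 := by
    by_contra hKne
    rcases lt_or_gt_of_ne hKne with hKlt | hKgt
    · -- K < 0 : take small positive t
      obtain ⟨t, htdef⟩ : ∃ t : ℝ, t = min (δ/2) ((-K)/(2*(|D|+1))) := ⟨_, rfl⟩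
      have htpos : 0 < t := by
        rw [htdef]
        exact lt_min (by linarith) (div_pos (by linarith) (by positivity))
      have htδ : |t| < δ := by
        rw [abs_of_pos htpos, htdef]
        exact lt_of_le_of_lt (min_le_left _ _) (by linarith)
      have hαt := hαhalf t htδ
      have hPt := P t htδ
      have htD : t * D < -K := by
        have h1' : t ≤ (-K)/(2*(|D|+1)) := htdef ▸ min_le_right _ _
        have h2' : t * D ≤ t * |D| :=
          mul_le_mul_of_nonneg_left (le_abs_self D) (le_of_lt htpos)
        have h3' : t * |D| ≤ (-K)/(2*(|D|+1)) * |D| :=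
          mul_le_mul_of_nonneg_right h1' (abs_nonneg D)
        have h4' : (-K)/(2*(|D|+1)) * |D| < -K := by
          rw [div_mul_eq_mul_div, div_lt_iff₀ (by positivity)]
          nlinarith [abs_nonneg D, hKlt]
        linarith
      have hcross : 2 * pathCoef b t * K < K := by
        nlinarith [mul_pos (show (0:ℝ) < 2*pathCoef b t - 1 by linarith)
          (show (0:ℝ) < -K by linarith)]
      nlinarith [mul_pos htpos (show (0:ℝ) < -(2*pathCoef b t*K + t*D) by linarith), hPt]
    · -- K > 0 : take small negative t
      obtain ⟨t, htdef⟩ : ∃ t : ℝ, t = -(min (δ/2) (K/(2*(|D|+1)))) := ⟨_, rfl⟩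
      have htneg : t < 0 := by
        rw [htdef, neg_lt, neg_zero]
        exact lt_min (by linarith) (div_pos (by linarith) (by positivity))
      have htδ : |t| < δ := by
        rw [abs_of_neg htneg, htdef, neg_neg]
        exact lt_of_le_of_lt (min_le_left _ _) (by linarith)
      have hαt := hαhalf t htδ
      have hPt := P t htδ
      have htD : -K < t * D := by
        have h1' : -t ≤ K/(2*(|D|+1)) := by rw [htdef, neg_neg]; exact min_le_right _ _
        have h2' : -(t * D) ≤ (-t) * |D| := by
          have hD1 := neg_abs_le D
          have hD2 := le_abs_self D
          rcases le_total 0 D with hd | hd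
          · nlinarith
          · nlinarith
        have h3' : (-t) * |D| ≤ K/(2*(|D|+1)) * |D| :=
          mul_le_mul_of_nonneg_right h1' (abs_nonneg D)
        have h4' : K/(2*(|D|+1)) * |D| < K := by
          rw [div_mul_eq_mul_div, div_lt_iff₀ (by positivity)]
          nlinarith [abs_nonneg D, hKgt]
        linarith
      have hcross : K < 2 * pathCoef b t * K := by
        nlinarith [mul_pos (show (0:ℝ) < 2*pathCoef b t - 1 by linarith)
          (show (0:ℝ) < K by linarith)]
      nlinarith [mul_pos (show (0:ℝ) < -t by linarith)
        (show (0:ℝ) < 2*pathCoef b t*K + t*D by linarith), hPt]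
  -- conclude D ≥ 0, i.e. the global inequality
  have hDpos : 0 ≤ D := by
    by_contra hDneg
    push_neg at hDneg
    have hPt := P (δ/2) (by rw [abs_of_pos (by linarith)]; linarith)
    rw [hK0] at hPt
    have hhalf : (0:ℝ) < δ/2 := by linarith
    nlinarith [hPt, mul_pos hhalf hhalf]
  linarith [hDpos]
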